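/- Assume p > 2, t₀ = 0 < t₁, and that μ₀ := lim_{α→0⁺} h(α) exists in (0,∞]; set λ₀ := sup_{α∈(0,t₁)} h(α) ∈ (0,∞]. Then: (1) if μ₀ < λ₀, then λ₀ is finite, and for every λ with 0 < λ ≤ μ₀ as well as for λ = λ₀ there exists at least one s > 0 such that u = s·v is a solution of (P_g) with parameter λ and 0 < C_v·s^γ < t₁, while for every λ ∈ (μ₀, λ₀) there exist at least two such values of s; (2) if μ₀ ≥ λ₀ (including the case μ₀ = ∞), then for every λ ∈ (0, μ₀) there exists at least one such s. -/

import Mathlib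

open Set Filter Topology

/-- The Laplacian of u : ℝᴺ → ℝ at x: the sum of the second partial derivatives. -/
noncomputable def lap {N : ℕ} (u : (Fin N → ℝ) → ℝ) (x : Fin N → ℝ) : ℝ :=
  ∑ i : Fin N, fderiv ℝ (fun y => fderiv ℝ u y (Pi.single i 1)) x (Pi.single i 1)

lemma lap_smul_aux {N : ℕ} {Ω : Set (Fin N → ℝ)} (hΩo : IsOpen Ω) {v : (Fin N → ℝ) → ℝ}
    (hv : ContDiffOn ℝ 2 v Ω) (s : ℝ) {x : Fin N → ℝ} (hx : x ∈ Ω) :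
    lap (s • v) x = s * lap v x := by
  have hdv : ∀ y ∈ Ω, DifferentiableAt ℝ v y := fun y hy =>
    (hv.differentiableOn (by norm_num)).differentiableAt (hΩo.mem_nhds hy)
  have hf1 : ContDiffOn ℝ 1 (fun y => fderiv ℝ v y) Ω :=
    hv.fderiv_of_isOpen hΩo (by norm_num)
  unfold lap
  rw [Finset.mul_sum]
  refine Finset.sum_congr rfl fun i _ => ?_
  set e := (Pi.single i 1 : Fin N → ℝ)
  have hF : DifferentiableAt ℝ (fun y => fderiv ℝ v y e) x :=
    (((hf1.differentiableOn one_ne_zero).differentiableAt (hΩo.mem_nhds hx)).clm_apply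
      (differentiableAt_const e))
  have heq : (fun y => fderiv ℝ (s • v) y e) =ᶠ[𝓝 x] (fun y => s * fderiv ℝ v y e) := by
    filter_upwards [hΩo.mem_nhds hx] with y hy
    have : fderiv ℝ (s • v) y = s • fderiv ℝ v y := by
      have := fderiv_const_smul (hdv y hy) s
      simpa [Pi.smul_def] using this
    rw [this]; simp
  rw [heq.fderiv_eq]
  have : fderiv ℝ (fun y => s * fderiv ℝ v y e) x = s • fderiv ℝ (fun y => fderiv ℝ v y e) x :=
    fderiv_const_mul hF s
  rw [this]; simp

lemma key_alg_aux (γ Cv α p lam aα : ℝ) (hCv : 0 < Cv) (hα : 0 < α)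
    (key : Cv ^ ((p - 2) / γ) * aα * α ^ ((2 - p) / γ) = lam) :
    aα = lam * ((α / Cv) ^ (1/γ)) ^ (p - 2) := by
  have h1 : ((α / Cv) ^ (1/γ)) ^ (p-2) = α ^ ((p-2)/γ) / Cv ^ ((p-2)/γ) := by
    rw [← Real.rpow_mul (by positivity), show 1/γ * (p-2) = (p-2)/γ by ring,
      Real.div_rpow hα.le hCv.le]
  have h2 : α ^ ((2 - p) / γ) * α ^ ((p-2)/γ) = 1 := by
    rw [← Real.rpow_add hα, show (2-p)/γ + (p-2)/γ = 0 by ring, Real.rpow_zero]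
  have hC : Cv ^ ((p - 2) / γ) ≠ 0 := (Real.rpow_pos_of_pos hCv _).ne'
  rw [h1, ← key]
  field_simp
  linear_combination -aα * h2

/- Powerlike superlinear case p > 2 on (0,t₁), with μ₀ := lim_{α→0⁺} h(α) ∈ (0,∞] and
   λ₀ := sup_{(0,t₁)} h ∈ (0,∞] (both in EReal):
   (1) if μ₀ < λ₀ then λ₀ is finite; for 0 < λ ≤ μ₀ and for λ = λ₀ there is at least one
   s > 0 with u = s·v a solution and 0 < C_v s^γ < t₁, and for μ₀ < λ < λ₀ at least two;
   (2) if μ₀ ≥ λ₀ then for every 0 < λ < μ₀ there is at least one such s. -/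
theorem stmt18 {N : ℕ} (Ω : Set (Fin N → ℝ)) (hΩo : IsOpen Ω) (hΩne : Ω.Nonempty)
    (p γ : ℝ) (hγ : 0 < γ) (hp : 2 < p)
    (v : (Fin N → ℝ) → ℝ) (hv : ContDiffOn ℝ 2 v Ω)
    (hv_pos : ∀ x ∈ Ω, 0 < v x)
    (hv_eq : ∀ x ∈ Ω, -lap v x = v x ^ (p - 1))
    (g : ((Fin N → ℝ) → ℝ) → ℝ)
    (hg : ∀ c : ℝ, 0 < c → ∀ w : (Fin N → ℝ) → ℝ, g (c • w) = c ^ γ * g w)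
    (hCv : 0 < g v)
    (t₁ : ℝ) (ht₁ : 0 < t₁)
    (a : ℝ → ℝ) (ha_cont : ContinuousOn a (Ici 0))
    (ha_nonneg : ∀ t : ℝ, 0 ≤ t → 0 ≤ a t)
    (ha0 : a 0 = 0) (hat₁ : a t₁ = 0)
    (ha_pos : ∀ α ∈ Ioo 0 t₁, 0 < a α)
    (h : ℝ → ℝ)
    (hh : ∀ α, h α = g v ^ ((p - 2) / γ) * a α * α ^ ((2 - p) / γ))
    (mu0 : EReal) (hmu0_pos : 0 < mu0)
    (hmu0 : Tendsto (fun α => (h α : EReal)) (𝓝[>] (0 : ℝ)) (𝓝 mu0))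
    (Lam0 : EReal) (hLam0 : Lam0 = sSup ((fun α => (h α : EReal)) '' Ioo 0 t₁))
    (Sol : ℝ → ℝ → Prop)
    (hSol : ∀ lam s : ℝ, (Sol lam s ↔
      ∀ x ∈ Ω, -(a (g (s • v)) * lap (s • v) x) = lam * (s * v x) ^ (p - 1))) :
    (mu0 < Lam0 →
      Lam0 ≠ ⊤ ∧
      (∀ lam : ℝ, 0 < lam → (lam : EReal) ≤ mu0 →
        ∃ s : ℝ, 0 < s ∧ Sol lam s ∧ 0 < g v * s ^ γ ∧ g v * s ^ γ < t₁) ∧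
      (∀ lam : ℝ, (lam : EReal) = Lam0 →
        ∃ s : ℝ, 0 < s ∧ Sol lam s ∧ 0 < g v * s ^ γ ∧ g v * s ^ γ < t₁) ∧
      (∀ lam : ℝ, mu0 < (lam : EReal) → (lam : EReal) < Lam0 →
        ∃ s₁ s₂ : ℝ, 0 < s₁ ∧ s₁ < s₂ ∧
          (Sol lam s₁ ∧ 0 < g v * s₁ ^ γ ∧ g v * s₁ ^ γ < t₁) ∧
          (Sol lam s₂ ∧ 0 < g v * s₂ ^ γ ∧ g v * s₂ ^ γ < t₁))) ∧
    (Lam0 ≤ mu0 →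
      ∀ lam : ℝ, 0 < lam → (lam : EReal) < mu0 →
        ∃ s : ℝ, 0 < s ∧ Sol lam s ∧ 0 < g v * s ^ γ ∧ g v * s ^ γ < t₁) := by
  -- the scaling map α ↦ s
  set S : ℝ → ℝ := fun α => (α / g v) ^ (1/γ) with hSdef
  have hS_pos : ∀ α : ℝ, 0 < α → 0 < S α := fun α hα =>
    Real.rpow_pos_of_pos (by positivity) _
  have hS_mono : ∀ α β : ℝ, 0 ≤ α → α < β → S α < S β := by
    intro α β hα hαβ
    exact Real.rpow_lt_rpow (by positivity) (by gcongr) (by positivity)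
  have hSγ : ∀ α : ℝ, 0 < α → g v * S α ^ γ = α := by
    intro α hα
    simp only [hSdef]
    rw [← Real.rpow_mul (by positivity), one_div, inv_mul_cancel₀ hγ.ne', Real.rpow_one]
    field_simp
  -- from a root of h to a solution
  have sol_S : ∀ (lam : ℝ) (α : ℝ), α ∈ Ioo 0 t₁ → h α = lam →
      Sol lam (S α) ∧ 0 < g v * (S α) ^ γ ∧ g v * (S α) ^ γ < t₁ := by
    intro lam α hα heq
    have hs : 0 < S α := hS_pos α hα.1
    have hgs : g v * S α ^ γ = α := hSγ α hα.1
    refine ⟨?_, by rw [hgs]; exact hα.1, by rw [hgs]; exact hα.2⟩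
    rw [hSol]
    intro x hx
    have hlap := lap_smul_aux hΩo hv (S α) hx
    have hgsv : g (S α • v) = g v * S α ^ γ := by rw [hg (S α) hs v]; ring
    have key : a α = lam * (S α) ^ (p-2) := by
      have hkey : g v ^ ((p - 2) / γ) * a α * α ^ ((2 - p) / γ) = lam := by
        rw [← hh α]; exact heq
      exact key_alg_aux γ (g v) α p lam (a α) hCv hα.1 hkey
    rw [hlap, hgsv, hgs]
    have hvp := hv_pos x hx
    have h2 : -(a α * (S α * lap v x)) = a α * S α * (v x ^ (p-1)) := by
      rw [← hv_eq x hx]; ring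
    rw [h2, Real.mul_rpow hs.le hvp.le, key,
      show p - 1 = (p-2) + 1 by ring, Real.rpow_add hs, Real.rpow_one]
    ring
  -- continuity of h on (0, t₁)
  have hcont : ContinuousOn h (Ioo 0 t₁) := by
    have hc : ContinuousOn (fun α : ℝ => g v ^ ((p-2)/γ) * a α * α ^ ((2-p)/γ)) (Ioo 0 t₁) := by
      apply ContinuousOn.mul
      · exact continuousOn_const.mul (ha_cont.mono fun x hx => le_of_lt hx.1)
      · intro x hx
        exact (Real.continuousAt_rpow_const x _ (Or.inl hx.1.ne')).continuousWithinAt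
    exact hc.congr fun α _ => hh α
  -- limit of h at t₁ from the left
  have htend1 : Tendsto h (𝓝[<] t₁) (𝓝 0) := by
    have hI : Ici (0:ℝ) ∈ 𝓝[<] t₁ := mem_nhdsWithin_of_mem_nhds (Ici_mem_nhds ht₁)
    have hA : Tendsto a (𝓝[<] t₁) (𝓝 0) := by
      have := (ha_cont t₁ (le_of_lt ht₁)).mono_left (nhdsWithin_le_iff.mpr hI)
      rwa [hat₁] at this
    have hR : Tendsto (fun α : ℝ => α ^ ((2-p)/γ)) (𝓝[<] t₁) (𝓝 (t₁ ^ ((2-p)/γ))) :=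
      ((Real.continuousAt_rpow_const t₁ _ (Or.inl ht₁.ne')).tendsto).mono_left
        nhdsWithin_le_nhds
    have hfun : h = fun α : ℝ => g v ^ ((p-2)/γ) * a α * α ^ ((2-p)/γ) := funext hh
    rw [hfun]
    have hmul : Tendsto (fun α : ℝ => g v ^ ((p-2)/γ) * a α * α ^ ((2-p)/γ)) (𝓝[<] t₁)
        (𝓝 (g v ^ ((p-2)/γ) * 0 * t₁ ^ ((2-p)/γ))) := (tendsto_const_nhds.mul hA).mul hR
    simpa using hmul
  -- root finder to the right of a point where h ≥ lam
  have find_root : ∀ lam : ℝ, 0 < lam → ∀ α₀ : ℝ, α₀ ∈ Ioo 0 t₁ → lam ≤ h α₀ →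
      ∃ α, α ∈ Ioo 0 t₁ ∧ α₀ ≤ α ∧ h α = lam := by
    intro lam hlam α₀ hα₀ hle
    have hev1 : {β : ℝ | h β < lam} ∈ 𝓝[<] t₁ := htend1 (Iio_mem_nhds hlam)
    have hev2 : Ioi α₀ ∈ 𝓝[<] t₁ := mem_nhdsWithin_of_mem_nhds (Ioi_mem_nhds hα₀.2)
    have hev3 : Iio t₁ ∈ 𝓝[<] t₁ := self_mem_nhdsWithin
    obtain ⟨β, ⟨hβ1, hβ2⟩, hβ3⟩ :=
      Filter.nonempty_of_mem (inter_mem (inter_mem hev1 hev2) hev3)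
    have hβIoo : β ∈ Ioo 0 t₁ := ⟨lt_trans hα₀.1 hβ2, hβ3⟩
    have hsub : Icc α₀ β ⊆ Ioo 0 t₁ := fun x hx =>
      ⟨lt_of_lt_of_le hα₀.1 hx.1, lt_of_le_of_lt hx.2 hβ3⟩
    obtain ⟨α, hαmem, hαeq⟩ :=
      intermediate_value_Icc' (le_of_lt hβ2) (hcont.mono hsub) ⟨le_of_lt hβ1, hle⟩
    exact ⟨α, hsub hαmem, hαmem.1, hαeq⟩
  constructor
  · -- case (1): mu0 < Lam0
    intro hlt
    have hmu_ne_top : mu0 ≠ ⊤ := by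
      intro hT
      rw [hT] at hlt
      exact not_top_lt hlt
    have hmu_ne_bot : mu0 ≠ ⊥ := by
      intro hB
      rw [hB] at hmu0_pos
      exact not_lt_bot hmu0_pos
    lift mu0 to ℝ using ⟨hmu_ne_top, hmu_ne_bot⟩ with μ
    have htend0 : Tendsto h (𝓝[>] (0:ℝ)) (𝓝 μ) := EReal.tendsto_coe.mp hmu0
    have hμpos : 0 < μ := by exact_mod_cast hmu0_pos
    obtain ⟨r, hr1, hr2⟩ := EReal.lt_iff_exists_real_btwn.mp hlt
    have hμr : μ < r := by exact_mod_cast hr1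
    have hr0 : 0 < r := lt_trans hμpos hμr
    rw [hLam0] at hr2
    obtain ⟨_, ⟨α₀, hα₀, rfl⟩, hα₀r⟩ := lt_sSup_iff.mp hr2
    have hrα₀ : r < h α₀ := by
      have : (r : EReal) < ((h α₀ : ℝ) : EReal) := hα₀r
      exact_mod_cast this
    have hev0 : {α : ℝ | h α < r} ∈ 𝓝[>] (0:ℝ) := htend0 (Iio_mem_nhds hμr)
    obtain ⟨δ, hδ0, hδsub⟩ := mem_nhdsGT_iff_exists_Ioo_subset.mp hev0
    have hδ0' : 0 < δ := mem_Ioi.mp hδ0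
    have hevt : {α : ℝ | h α < r} ∈ 𝓝[<] t₁ := htend1 (Iio_mem_nhds hr0)
    obtain ⟨l, hlt₁, hlsub⟩ := mem_nhdsLT_iff_exists_Ioo_subset.mp hevt
    have hlt₁' : l < t₁ := mem_Iio.mp hlt₁
    set c := min (δ/2) α₀ with hcdef
    set d := max ((l+t₁)/2) α₀ with hddef
    have hc0 : 0 < c := lt_min (by linarith) hα₀.1
    have hcd : c ≤ d := le_trans (min_le_right _ _) (le_max_right _ _)
    have hdt : d < t₁ := max_lt (by linarith) hα₀.2
    have hKsub : Icc c d ⊆ Ioo 0 t₁ := fun x hx =>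
      ⟨lt_of_lt_of_le hc0 hx.1, lt_of_le_of_lt hx.2 hdt⟩
    obtain ⟨αs, hαsK, hαsmax⟩ :=
      isCompact_Icc.exists_isMaxOn (nonempty_Icc.mpr hcd) (hcont.mono hKsub)
    have hα₀K : α₀ ∈ Icc c d := ⟨min_le_right _ _, le_max_right _ _⟩
    have hαs_mem : αs ∈ Ioo 0 t₁ := hKsub hαsK
    have hrαs : r < h αs := lt_of_lt_of_le hrα₀ (hαsmax hα₀K)
    have hub : ∀ α ∈ Ioo 0 t₁, h α ≤ h αs := by
      intro α hα
      rcases lt_or_ge α c with hltc | hgec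
      · have hmem : α ∈ Ioo 0 δ :=
          ⟨hα.1, lt_of_lt_of_le hltc (le_trans (min_le_left _ _) (by linarith))⟩
        exact le_of_lt (lt_trans (hδsub hmem) hrαs)
      · rcases le_or_gt α d with hled | hgtd
        · exact hαsmax ⟨hgec, hled⟩
        · have hmem : α ∈ Ioo l t₁ :=
            ⟨lt_of_le_of_lt (le_trans (by linarith : l ≤ (l+t₁)/2) (le_max_left _ _)) hgtd,
              hα.2⟩
          exact le_of_lt (lt_trans (hlsub hmem) hrαs)
    have hLam_eq : Lam0 = ((h αs : ℝ) : EReal) := by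
      rw [hLam0]
      apply le_antisymm
      · apply sSup_le
        rintro b ⟨α, hα, rfl⟩
        exact EReal.coe_le_coe_iff.mpr (hub α hα)
      · exact le_sSup ⟨αs, hαs_mem, rfl⟩
    refine ⟨by rw [hLam_eq]; exact EReal.coe_ne_top _, ?_, ?_, ?_⟩
    · -- 0 < lam ≤ μ
      intro lam hlam hlamle
      have hlamμ : lam ≤ μ := by exact_mod_cast hlamle
      have hle : lam ≤ h αs := le_trans hlamμ (le_of_lt (lt_trans hμr hrαs))
      obtain ⟨α, hαm, _, hαeq⟩ := find_root lam hlam αs hαs_mem hle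
      obtain ⟨hs1, hs2, hs3⟩ := sol_S lam α hαm hαeq
      exact ⟨S α, hS_pos α hαm.1, hs1, hs2, hs3⟩
    · -- lam = Lam0
      intro lam hlamLam
      have heq : lam = h αs := by
        rw [hLam_eq] at hlamLam
        exact_mod_cast hlamLam
      obtain ⟨hs1, hs2, hs3⟩ := sol_S lam αs hαs_mem heq.symm
      exact ⟨S αs, hS_pos αs hαs_mem.1, hs1, hs2, hs3⟩
    · -- μ < lam < Lam0 : two solutions
      intro lam hμlam hlamLam
      have hμlam' : μ < lam := by exact_mod_cast hμlam
      have hlam_lt : lam < h αs := by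
        rw [hLam_eq] at hlamLam
        exact_mod_cast hlamLam
      have hlam0 : 0 < lam := lt_trans hμpos hμlam'
      obtain ⟨α₂, hα₂m, hα₂ge, hα₂eq⟩ := find_root lam hlam0 αs hαs_mem (le_of_lt hlam_lt)
      have hα₂gt : αs < α₂ := by
        rcases lt_or_eq_of_le hα₂ge with hlt' | heq'
        · exact hlt'
        · exfalso; rw [← heq'] at hα₂eq; exact hlam_lt.ne' hα₂eq
      have hev : {α : ℝ | h α < lam} ∈ 𝓝[>] (0:ℝ) := htend0 (Iio_mem_nhds hμlam')
      have hev2 : Iio αs ∈ 𝓝[>] (0:ℝ) := mem_nhdsWithin_of_mem_nhds (Iio_mem_nhds hαs_mem.1)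
      have hev3 : Ioi (0:ℝ) ∈ 𝓝[>] (0:ℝ) := self_mem_nhdsWithin
      obtain ⟨η, ⟨hη1, hη2⟩, hη3⟩ :=
        Filter.nonempty_of_mem (inter_mem (inter_mem hev hev2) hev3)
      have hη0 : 0 < η := hη3
      have hηαs : η < αs := hη2
      have hsub : Icc η αs ⊆ Ioo 0 t₁ := fun x hx =>
        ⟨lt_of_lt_of_le hη0 hx.1, lt_of_le_of_lt hx.2 hαs_mem.2⟩
      obtain ⟨α₁, hα₁mem, hα₁eq⟩ :=
        intermediate_value_Icc (le_of_lt hηαs) (hcont.mono hsub)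
          ⟨le_of_lt hη1, le_of_lt hlam_lt⟩
      have hα₁lt : α₁ < αs := by
        rcases lt_or_eq_of_le hα₁mem.2 with hlt' | heq'
        · exact hlt'
        · exfalso; rw [heq'] at hα₁eq; exact hlam_lt.ne' hα₁eq
      have hα₁Ioo : α₁ ∈ Ioo 0 t₁ := hsub hα₁mem
      obtain ⟨ha1, ha2, ha3⟩ := sol_S lam α₁ hα₁Ioo hα₁eq
      obtain ⟨hb1, hb2, hb3⟩ := sol_S lam α₂ hα₂m hα₂eq
      exact ⟨S α₁, S α₂, hS_pos α₁ hα₁Ioo.1,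
        hS_mono α₁ α₂ (le_of_lt hα₁Ioo.1) (lt_trans hα₁lt hα₂gt),
        ⟨ha1, ha2, ha3⟩, ⟨hb1, hb2, hb3⟩⟩
  · -- case (2): Lam0 ≤ mu0
    intro _ lam hlam hlamlt
    have hev : {α : ℝ | (lam : EReal) < ((h α : ℝ) : EReal)} ∈ 𝓝[>] (0:ℝ) :=
      hmu0 (Ioi_mem_nhds hlamlt)
    have hev2 : Iio t₁ ∈ 𝓝[>] (0:ℝ) := mem_nhdsWithin_of_mem_nhds (Iio_mem_nhds ht₁)
    have hev3 : Ioi (0:ℝ) ∈ 𝓝[>] (0:ℝ) := self_mem_nhdsWithin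
    obtain ⟨η, ⟨hη1, hη2⟩, hη3⟩ :=
      Filter.nonempty_of_mem (inter_mem (inter_mem hev hev2) hev3)
    have hηIoo : η ∈ Ioo 0 t₁ := ⟨hη3, hη2⟩
    have hηlam : lam < h η := by exact_mod_cast hη1
    obtain ⟨α, hαm, _, hαeq⟩ := find_root lam hlam η hηIoo (le_of_lt hηlam)
    obtain ⟨hs1, hs2, hs3⟩ := sol_S lam α hαm hαeq
    exact ⟨S α, hS_pos α hαm.1, hs1, hs2, hs3⟩
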